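/- For every integer n ≥ 0, the trace of A_r^n equals (2r-1)^n + r·1^n + (r-1)·(-1)^n, where A_r = J_{2r} - P_r with J the all-ones matrix and P the anti-diagonal permutation matrix. -/

import Mathlib

/-- The all-ones `2r × 2r` matrix `J`. -/
def Jmat (r : ℕ) : Matrix (Fin (2 * r)) (Fin (2 * r)) ℚ :=
  Matrix.of fun _ _ => 1

/-- The anti-diagonal permutation matrix `P`, with `(P)_{ij} = 1` iff `i + j = 2r + 1`
(in 1-based indexing). -/
def Pmat (r : ℕ) : Matrix (Fin (2 * r)) (Fin (2 * r)) ℚ :=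
  Matrix.of fun i j => if (i : ℕ) + (j : ℕ) + 2 = 2 * r + 1 then 1 else 0

/-- The reflection `i ↦ 2r-1-i` on `Fin (2r)`. -/
def refl' (r : ℕ) (hr : 1 ≤ r) (j : Fin (2 * r)) : Fin (2 * r) :=
  ⟨2 * r - 1 - (j : ℕ), by have := j.isLt; omega⟩

lemma P_cond (r : ℕ) (hr : 1 ≤ r) (k j : Fin (2 * r)) :
    ((k : ℕ) + (j : ℕ) + 2 = 2 * r + 1) ↔ k = refl' r hr j := by
  rw [Fin.ext_iff]
  have hk := k.isLt
  have hj := j.isLt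
  simp only [refl']
  omega

lemma J_mul_J (r : ℕ) : Jmat r * Jmat r = ((2 * r : ℕ) : ℚ) • Jmat r := by
  ext i j
  simp [Matrix.mul_apply, Jmat, Finset.sum_const]

lemma J_mul_P (r : ℕ) (hr : 1 ≤ r) : Jmat r * Pmat r = Jmat r := by
  ext i j
  simp only [Matrix.mul_apply, Jmat, Pmat, Matrix.of_apply, one_mul]
  simp only [P_cond r hr]
  simp

lemma P_mul_J (r : ℕ) (hr : 1 ≤ r) : Pmat r * Jmat r = Jmat r := by
  ext i j
  simp only [Matrix.mul_apply, Jmat, Pmat, Matrix.of_apply, mul_one]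
  have : ∀ k : Fin (2 * r), ((i : ℕ) + (k : ℕ) + 2 = 2 * r + 1) ↔ k = refl' r hr i := by
    intro k
    have hk := k.isLt
    have hi := i.isLt
    simp only [refl', Fin.ext_iff]
    omega
  simp only [this]
  simp

lemma P_mul_P (r : ℕ) (hr : 1 ≤ r) : Pmat r * Pmat r = 1 := by
  ext i j
  simp only [Matrix.mul_apply, Pmat, Matrix.of_apply]
  have h1 : ∀ k : Fin (2 * r), ((i : ℕ) + (k : ℕ) + 2 = 2 * r + 1) ↔ k = refl' r hr i := by
    intro k
    have hk := k.isLt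
    have hi := i.isLt
    simp only [refl', Fin.ext_iff]
    omega
  simp only [h1, ite_mul, one_mul, zero_mul]
  rw [Finset.sum_ite_eq' Finset.univ (refl' r hr i)]
  have hi := i.isLt
  have hj := j.isLt
  simp only [Finset.mem_univ, if_true, refl', Matrix.one_apply, Fin.ext_iff]
  by_cases h : (i : ℕ) = (j : ℕ)
  · rw [if_pos h]; exact if_pos (by omega)
  · rw [if_neg h]; exact if_neg (by omega)

lemma trace_J (r : ℕ) : (Jmat r).trace = ((2 * r : ℕ) : ℚ) := by
  simp [Matrix.trace, Matrix.diag, Jmat]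

lemma trace_P (r : ℕ) : (Pmat r).trace = 0 := by
  simp only [Matrix.trace, Matrix.diag, Pmat, Matrix.of_apply]
  apply Finset.sum_eq_zero
  intro i _
  rw [if_neg]
  omega

def combo (r : ℕ) (a b c : ℚ) : Matrix (Fin (2 * r)) (Fin (2 * r)) ℚ :=
  a • Jmat r + b • (1 : Matrix (Fin (2 * r)) (Fin (2 * r)) ℚ) + c • Pmat r

lemma step (r : ℕ) (hr : 1 ≤ r) (a b c : ℚ) :
    combo r a b c * (Jmat r - Pmat r) =
      combo r ((2 * (r : ℚ) - 1) * a + b + c) (-c) (-b) := by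
  unfold combo
  simp only [add_mul, mul_sub, Matrix.smul_mul, J_mul_J, J_mul_P r hr, P_mul_J r hr,
    P_mul_P r hr, Matrix.one_mul]
  push_cast
  module

lemma trace_combo (r : ℕ) (a b c : ℚ) :
    (combo r a b c).trace = a * (2 * r) + b * (2 * r) := by
  unfold combo
  rw [Matrix.trace_add, Matrix.trace_add, Matrix.trace_smul, Matrix.trace_smul,
    Matrix.trace_smul, trace_J, trace_P, Matrix.trace_one]
  simp only [Fintype.card_fin, smul_eq_mul, mul_zero, add_zero]
  push_cast
  ring

lemma key (r : ℕ) (hr : 1 ≤ r) (n : ℕ) :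
    (Jmat r - Pmat r) ^ n =
      combo r (((2 * (r : ℚ) - 1) ^ n - (-1) ^ n) / (2 * r)) ((1 + (-1) ^ n) / 2)
        (((-1) ^ n - 1) / 2) := by
  have hr0 : (r : ℚ) ≠ 0 := by exact_mod_cast Nat.one_le_iff_ne_zero.mp hr
  induction n with
  | zero =>
    unfold combo
    simp
  | succ n ih =>
    rw [pow_succ, ih, step r hr]
    have ha : (2 * (r : ℚ) - 1) * (((2 * (r : ℚ) - 1) ^ n - (-1) ^ n) / (2 * r))
        + (1 + (-1) ^ n) / 2 + ((-1) ^ n - 1) / 2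
        = ((2 * (r : ℚ) - 1) ^ (n + 1) - (-1) ^ (n + 1)) / (2 * r) := by
      field_simp
      ring
    have hb : -(((-1 : ℚ) ^ n - 1) / 2) = (1 + (-1) ^ (n + 1)) / 2 := by
      rw [pow_succ]; ring
    have hc : -((1 + (-1 : ℚ) ^ n) / 2) = ((-1) ^ (n + 1) - 1) / 2 := by
      rw [pow_succ]; ring
    rw [ha, hb, hc]

/-- For every `n ≥ 0`, the trace of `A_r^n` equals `(2r-1)^n + r·1^n + (r-1)·(-1)^n`,
where `A_r = J_{2r} - P_r`. -/
theorem trace_pow_A (r : ℕ) (hr : 1 ≤ r) (n : ℕ) :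
    Matrix.trace ((Jmat r - Pmat r) ^ n) =
      (2 * (r : ℚ) - 1) ^ n + (r : ℚ) * 1 ^ n + ((r : ℚ) - 1) * (-1) ^ n := by
  have hr0 : (r : ℚ) ≠ 0 := by exact_mod_cast Nat.one_le_iff_ne_zero.mp hr
  rw [key r hr n, trace_combo]
  field_simp
  ring
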